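/- Let f : ℝ^n → ℝ be differentiable with L-Lipschitz continuous gradient (L > 0), attaining a global minimum value f* = f(x*), and satisfying the Polyak–Łojasiewicz condition (1/2)‖∇f(x)‖² ≥ μ(f(x) − f*) for all x, for some μ ∈ (0, L]. If x⁺ = x − (1/L)∇f(x), then f(x⁺) − f* ≤ (1 − μ/L)(f(x) − f*). -/

import Mathlib

/-!
Along a segment `t ↦ x + t • v` the Lipschitz bound lets the slope of `f` exceed `⟪∇f x, v⟫` by at
most `L t ‖v‖²`, so `f` stays below the quadratic model `f x + ⟪∇f x, v⟫ + L/2 ‖v‖²` (the descent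
lemma). For `v = -(1/L) ∇f x` this guarantees a decrease of `‖∇f x‖² / (2L)`, and the PL inequality
bounds that decrease from below by `(μ/L) (f x - f*)`.
-/

open RealInnerProductSpace Set

section LipschitzGradient

variable {E : Type*} [NormedAddCommGroup E] [InnerProductSpace ℝ E] [CompleteSpace E]
  {f : E → ℝ} {f' : E → E} {L : ℝ}

theorem le_add_inner_add_sq_of_lipschitz_gradient (hdiff : ∀ x, HasGradientAt f (f' x) x)
    (hlip : ∀ x y, ‖f' x - f' y‖ ≤ L * ‖x - y‖) (x v : E) :
    f (x + v) ≤ f x + ⟪f' x, v⟫ + L / 2 * ‖v‖ ^ 2 := by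
  have hφ : ∀ t : ℝ, HasDerivAt (fun t : ℝ => f (x + t • v)) ⟪f' (x + t • v), v⟫ t := by
    intro t
    have hline : HasDerivAt (fun t : ℝ => x + t • v) v t := by
      simpa using ((hasDerivAt_id t).smul_const v).const_add x
    exact (hdiff (x + t • v)).hasFDerivAt.comp_hasDerivAt t hline
  have hB : ∀ t : ℝ, HasDerivAt (fun t : ℝ => f x + t * ⟪f' x, v⟫ + L / 2 * t ^ 2 * ‖v‖ ^ 2)
      (⟪f' x, v⟫ + L * t * ‖v‖ ^ 2) t := by
    intro t
    refine ((((hasDerivAt_id' t).mul_const ⟪f' x, v⟫).const_add (f x)).add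
      (((hasDerivAt_pow 2 t).const_mul (L / 2)).mul_const (‖v‖ ^ 2))).congr_deriv ?_
    ring
  have hslope : ∀ t ∈ Ico (0 : ℝ) 1,
      ⟪f' (x + t • v), v⟫ ≤ ⟪f' x, v⟫ + L * t * ‖v‖ ^ 2 := by
    rintro t ⟨ht, -⟩
    have hdist : ‖f' (x + t • v) - f' x‖ ≤ L * (t * ‖v‖) := by
      simpa [norm_smul, abs_of_nonneg ht] using hlip (x + t • v) x
    calc ⟪f' (x + t • v), v⟫ = ⟪f' x, v⟫ + ⟪f' (x + t • v) - f' x, v⟫ := by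
          rw [inner_sub_left]; ring
      _ ≤ ⟪f' x, v⟫ + ‖f' (x + t • v) - f' x‖ * ‖v‖ := by gcongr; exact real_inner_le_norm _ _
      _ ≤ ⟪f' x, v⟫ + L * (t * ‖v‖) * ‖v‖ := by gcongr
      _ = ⟪f' x, v⟫ + L * t * ‖v‖ ^ 2 := by ring
  have hmodel := image_le_of_deriv_right_le_deriv_boundary
    (fun t _ => (hφ t).continuousAt.continuousWithinAt) (fun t _ => (hφ t).hasDerivWithinAt)
    (by simp) (fun t _ => (hB t).continuousAt.continuousWithinAt)
    (fun t _ => (hB t).hasDerivWithinAt) hslope (right_mem_Icc.2 zero_le_one)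
  simpa using hmodel

theorem apply_sub_inv_smul_gradient_le (hL : 0 < L) (hdiff : ∀ x, HasGradientAt f (f' x) x)
    (hlip : ∀ x y, ‖f' x - f' y‖ ≤ L * ‖x - y‖) (x : E) :
    f (x - (1 / L) • f' x) ≤ f x - 1 / (2 * L) * ‖f' x‖ ^ 2 := by
  have h := le_add_inner_add_sq_of_lipschitz_gradient hdiff hlip x (-((1 / L) • f' x))
  rw [← sub_eq_add_neg, inner_neg_right, inner_smul_right, real_inner_self_eq_norm_sq, norm_neg,
    norm_smul, Real.norm_of_nonneg (by positivity)] at h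
  calc f (x - (1 / L) • f' x)
      ≤ f x + -(1 / L * ‖f' x‖ ^ 2) + L / 2 * (1 / L * ‖f' x‖) ^ 2 := h
    _ = f x - 1 / (2 * L) * ‖f' x‖ ^ 2 := by field_simp; ring

end LipschitzGradient

theorem gradient_step_PL_rate_general
    (n : ℕ) (f : EuclideanSpace ℝ (Fin n) → ℝ)
    (f' : EuclideanSpace ℝ (Fin n) → EuclideanSpace ℝ (Fin n))
    (L μ : ℝ) (hL : 0 < L)
    (hdiff : ∀ x, HasGradientAt f (f' x) x)
    (hlip : ∀ x y, ‖f' x - f' y‖ ≤ L * ‖x - y‖)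
    (xstar : EuclideanSpace ℝ (Fin n))
    (hPL : ∀ x, μ * (f x - f xstar) ≤ 1 / 2 * ‖f' x‖ ^ 2)
    (x xplus : EuclideanSpace ℝ (Fin n))
    (hstep : xplus = x - (1 / L) • f' x) :
    f xplus - f xstar ≤ (1 - μ / L) * (f x - f xstar) := by
  have hdecrease := apply_sub_inv_smul_gradient_le hL hdiff hlip x
  have hPL_scaled : μ / L * (f x - f xstar) ≤ 1 / (2 * L) * ‖f' x‖ ^ 2 := by
    calc μ / L * (f x - f xstar) = 1 / L * (μ * (f x - f xstar)) := by ring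
      _ ≤ 1 / L * (1 / 2 * ‖f' x‖ ^ 2) := by have := hPL x; gcongr
      _ = 1 / (2 * L) * ‖f' x‖ ^ 2 := by ring
  rw [hstep]
  linarith

theorem gradient_step_PL_rate
    (n : ℕ) (f : EuclideanSpace ℝ (Fin n) → ℝ)
    (f' : EuclideanSpace ℝ (Fin n) → EuclideanSpace ℝ (Fin n))
    (L μ : ℝ) (hL : 0 < L) (hμ : 0 < μ) (hμL : μ ≤ L)
    (hdiff : ∀ x, HasGradientAt f (f' x) x)
    (hlip : ∀ x y, ‖f' x - f' y‖ ≤ L * ‖x - y‖)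
    (xstar : EuclideanSpace ℝ (Fin n)) (hmin : ∀ x, f xstar ≤ f x)
    (hPL : ∀ x, μ * (f x - f xstar) ≤ 1 / 2 * ‖f' x‖ ^ 2)
    (x xplus : EuclideanSpace ℝ (Fin n))
    (hstep : xplus = x - (1 / L) • f' x) :
    f xplus - f xstar ≤ (1 - μ / L) * (f x - f xstar) :=
  gradient_step_PL_rate_general n f f' L μ hL hdiff hlip xstar hPL x xplus hstep
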